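/- For every k ≥ 0, the language L(A_k) is (k+1)-piecewise testable, where A_k is the NFA with states {0, 1, …, k}, alphabet {a_0, a_1, …, a_k}, all states initial, accepting state 0, and transitions: i·a_j = {i} whenever k ≥ i > j ≥ 0, and i·a_i = {0, 1, …, i−1} whenever k ≥ i ≥ 1 (no other transitions). -/

import Mathlib

/-- `subk k w` is the set of scattered subwords of `w` of length at most `k`. -/
def subk {α : Type*} (k : ℕ) (w : List α) : Set (List α) :=
  {u | u.length ≤ k ∧ u.Sublist w}

/-- Two words are `k`-equivalent if they have the same subwords of length at most `k`. -/
def kEquiv {α : Type*} (k : ℕ) (u v : List α) : Prop :=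
  subk k u = subk k v

/-- A language is `k`-piecewise testable (Simon's characterization):
`k`-equivalent words are equi-members. -/
def IsPT {α : Type*} (k : ℕ) (L : Language α) : Prop :=
  ∀ u v : List α, kEquiv k u v → (u ∈ L ↔ v ∈ L)

/-- A DFA is minimal if all states are reachable and pairwise distinguishable. -/
def IsMinimalDFA {α σ : Type*} (A : DFA α σ) : Prop :=
  (∀ q : σ, ∃ w : List α, A.eval w = q) ∧
  ∀ p q : σ,
    (∀ w : List α, (A.evalFrom p w ∈ A.accept ↔ A.evalFrom q w ∈ A.accept)) → p = q

/-- There is a simple path (pairwise distinct states) with `m` transitions in the DFA `A`. -/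
def DFAHasSimplePath {α σ : Type*} (A : DFA α σ) (m : ℕ) : Prop :=
  ∃ (qs : Fin (m + 1) → σ) (as : Fin m → α),
    Function.Injective qs ∧ ∀ i : Fin m, A.step (qs i.castSucc) (as i) = qs i.succ

/-- The depth of a DFA: the number of transitions on a longest simple path. -/
noncomputable def dfaDepth {α σ : Type*} (A : DFA α σ) : ℕ :=
  sSup {m | DFAHasSimplePath A m}

/-- There is a simple path (pairwise distinct states) with `m` transitions in the NFA `A`. -/
def NFAHasSimplePath {α σ : Type*} (A : NFA α σ) (m : ℕ) : Prop :=
  ∃ (qs : Fin (m + 1) → σ) (as : Fin m → α),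
    Function.Injective qs ∧ ∀ i : Fin m, qs i.succ ∈ A.step (qs i.castSucc) (as i)

/-- The depth of an NFA: the number of transitions on a longest simple path. -/
noncomputable def nfaDepth {α σ : Type*} (A : NFA α σ) : ℕ :=
  sSup {m | NFAHasSimplePath A m}

/-- The NFA `A_k`: states `{0,…,k}`, alphabet `{a_0,…,a_k}` (both modeled by
`Fin (k+1)`), all states initial, accepting state `0`, with `i·a_j = {i}` for
`i > j` and `i·a_i = {0,…,i-1}` for `i ≥ 1` (no other transitions). -/
def Ak (k : ℕ) : NFA (Fin (k + 1)) (Fin (k + 1)) where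
  step := fun q a =>
    if a < q then {q} else if q = a ∧ 0 < q then {p | p < q} else ∅
  start := Set.univ
  accept := {0}

/-!
In `A_k` a letter below the current state loops, reading the current state `c > 0` drops to any
state below `c`, and every other letter blocks. Hence the accepted words are the words
`u₁ c₁ u₂ c₂ ⋯ u_r c_r` with `c₁ > ⋯ > c_r > 0` and every letter of `u_i` below `c_i`. In such a
word `c₁` is the strict maximum and occurs once; since this is expressed by subwords of length
at most 2, it passes to any `(k+1)`-equivalent word `v`, which thus also splits as `v₁ c₁ v₂`.
A subword `x` of the suffix after the unique `c₁` corresponds to the subword `c₁ x` of the whole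
word, so the suffixes are `c₁`-equivalent, and induction on `c₁` concludes.
-/

open List

theorem List.cons_sublist_append_cons_iff {α : Type*} {c : α} {u₁ u₂ x : List α}
    (hc : c ∉ u₁) : c :: x <+ u₁ ++ c :: u₂ ↔ x <+ u₂ := by
  induction u₁ with
  | nil => exact cons_sublist_cons
  | cons b t ih =>
    rw [mem_cons, not_or] at hc
    rw [cons_append, ← ih hc.2]
    exact ⟨Sublist.of_cons_of_ne hc.1, fun h => h.cons b⟩

namespace kEquiv

variable {α : Type*} {n : ℕ} {u v : List α}

theorem symm (h : kEquiv n u v) : kEquiv n v u :=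
  Eq.symm h

theorem sublist_iff (h : kEquiv n u v) {x : List α} (hx : x.length ≤ n) : x <+ u ↔ x <+ v := by
  simpa only [subk, Set.mem_ofPred_eq, hx, true_and] using Set.ext_iff.1 h x

theorem mem_iff (h : kEquiv n u v) (hn : 0 < n) {a : α} : a ∈ u ↔ a ∈ v := by
  rw [← singleton_sublist, ← singleton_sublist, h.sublist_iff (x := [a]) hn]

theorem mono {m : ℕ} (h : kEquiv n u v) (hmn : m ≤ n) : kEquiv m u v :=
  Set.ext fun _ => and_congr_right fun hx => h.sublist_iff (hx.trans hmn)

theorem of_append_cons {c : α} {u₁ u₂ v₁ v₂ : List α}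
    (h : kEquiv (n + 1) (u₁ ++ c :: u₂) (v₁ ++ c :: v₂)) (hu : c ∉ u₁) (hv : c ∉ v₁) :
    kEquiv n u₂ v₂ :=
  Set.ext fun x => and_congr_right fun hx => by
    rw [← cons_sublist_append_cons_iff (x := x) hu, ← cons_sublist_append_cons_iff (x := x) hv,
      h.sublist_iff (by simpa using hx)]

theorem exists_eq_append_cons [LinearOrder α] {c : α} {u₁ u₂ : List α}
    (h : kEquiv n (u₁ ++ c :: u₂) v) (hn : 2 ≤ n) (hu₁ : ∀ a ∈ u₁, a < c)
    (hu₂ : ∀ a ∈ u₂, a < c) :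
    ∃ v₁ v₂, v = v₁ ++ c :: v₂ ∧ (∀ a ∈ v₁, a < c) ∧ (∀ a ∈ v₂, a < c) := by
  have hv_le : ∀ a ∈ v, a ≤ c := by
    intro a ha
    have ha := (h.mem_iff (by omega)).2 ha
    simp only [mem_append, mem_cons] at ha
    rcases ha with ha | rfl | ha
    exacts [(hu₁ a ha).le, le_rfl, (hu₂ a ha).le]
  have hcc : ¬ [c, c] <+ v := fun hcc => by
    have hc : [c] <+ u₂ := (cons_sublist_append_cons_iff fun hc => (hu₁ c hc).false).1
      ((h.sublist_iff (x := [c, c]) hn).2 hcc)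
    exact (hu₂ c (singleton_sublist.1 hc)).false
  obtain ⟨v₁, v₂, rfl⟩ := append_of_mem (a := c) ((h.mem_iff (by omega)).1 (by simp))
  refine ⟨v₁, v₂, rfl, fun a ha => (hv_le a (by simp [ha])).lt_of_ne ?_,
    fun a ha => (hv_le a (by simp [ha])).lt_of_ne ?_⟩
  · rintro rfl
    exact hcc ((singleton_sublist.2 ha).append (singleton_sublist.2 mem_cons_self))
  · rintro rfl
    exact hcc ((cons_sublist_cons.2 (singleton_sublist.2 ha)).trans (sublist_append_right _ _))

end kEquiv

/-- `BlockWord q w`: either `q = 0` and `w = []`, or `w = u₁ c₁ u₂ c₂ ⋯ u_r c_r` with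
`q = c₁ > c₂ > ⋯ > c_r > 0` and every letter of `u_i` below `c_i`. -/
inductive BlockWord {k : ℕ} : Fin (k + 1) → List (Fin (k + 1)) → Prop
  | nil : BlockWord 0 []
  | block {c p : Fin (k + 1)} {u w : List (Fin (k + 1))} :
      (∀ a ∈ u, a < c) → p < c → BlockWord p w → BlockWord c (u ++ c :: w)

namespace BlockWord

variable {k : ℕ} {q a : Fin (k + 1)} {w : List (Fin (k + 1))}

theorem le_of_mem (h : BlockWord q w) (ha : a ∈ w) : a ≤ q := by
  induction h with
  | nil => simp at ha
  | block hu hpc _ ih =>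
    simp only [mem_append, mem_cons] at ha
    rcases ha with ha | rfl | ha
    exacts [(hu a ha).le, le_rfl, (ih ha).trans hpc.le]

theorem cons_of_lt (h : BlockWord q w) (ha : a < q) : BlockWord q (a :: w) := by
  cases h with
  | nil => exact absurd ha (Fin.not_lt_zero a)
  | block hu hpc hw => exact block (u := a :: _) (forall_mem_cons.2 ⟨ha, hu⟩) hpc hw

theorem of_kEquiv (h : BlockWord q w) {v : List (Fin (k + 1))} {d : ℕ} (hd : 0 < d)
    (hw : ∀ a ∈ w, (a : ℕ) < d) (he : kEquiv d w v) : BlockWord q v := by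
  induction h generalizing v d with
  | nil =>
    obtain rfl : v = [] := eq_nil_iff_forall_not_mem.2 fun a ha => by
      simpa using (he.mem_iff hd).2 ha
    exact nil
  | @block c p u w hu hpc hw' ih =>
    have hcd : (c : ℕ) < d := hw c (by simp)
    have hc : 0 < (c : ℕ) := (Nat.zero_le p).trans_lt hpc
    have hw'c : ∀ a ∈ w, a < c := fun a ha => (hw'.le_of_mem ha).trans_lt hpc
    obtain ⟨v₁, v₂, rfl, hv₁, -⟩ := he.exists_eq_append_cons (by omega) hu hw'c
    have htail : kEquiv c w v₂ :=
      (he.mono hcd).of_append_cons (fun h => (hu c h).false) (fun h => (hv₁ c h).false)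
    exact block hv₁ hpc (ih hc hw'c htail)

end BlockWord

namespace Ak

variable {k : ℕ} {q a : Fin (k + 1)} {w : List (Fin (k + 1))}

theorem evalFrom_of_forall_lt (h : ∀ a ∈ w, a < q) : (Ak k).evalFrom {q} w = {q} := by
  induction w with
  | nil => rfl
  | cons a w ih =>
    rw [forall_mem_cons] at h
    rw [NFA.evalFrom_cons, NFA.stepSet_singleton, ← ih h.2]
    simp [Ak, h.1]

theorem zero_mem_evalFrom_cons_iff :
    0 ∈ (Ak k).evalFrom {q} (a :: w) ↔
      a < q ∧ 0 ∈ (Ak k).evalFrom {q} w ∨ a = q ∧ ∃ p < q, 0 ∈ (Ak k).evalFrom {p} w := by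
  rw [NFA.evalFrom_cons, NFA.stepSet_singleton, NFA.mem_evalFrom_iff_exists, show (Ak k).step q a =
    if a < q then {q} else if q = a ∧ 0 < q then {p | p < q} else ∅ from rfl]
  split_ifs with h₁ h₂
  · simp [h₁, h₁.ne]
  · obtain ⟨rfl, -⟩ := h₂
    simp
  · simp only [Set.mem_empty_iff_false, false_and, exists_false, h₁, false_or, false_iff]
    rintro ⟨rfl, p, hp, -⟩
    exact h₂ ⟨rfl, (Fin.zero_le p).trans_lt hp⟩

theorem zero_mem_evalFrom_iff : 0 ∈ (Ak k).evalFrom {q} w ↔ BlockWord q w := by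
  constructor
  · induction w generalizing q with
    | nil =>
      rintro rfl
      exact .nil
    | cons a w ih =>
      rw [zero_mem_evalFrom_cons_iff]
      rintro (⟨ha, h⟩ | ⟨rfl, p, hp, h⟩)
      · exact (ih h).cons_of_lt ha
      · exact .block (u := []) (by simp) hp (ih h)
  · intro h
    induction h with
    | nil => rfl
    | @block c p u w hu hpc _ ih =>
      rw [NFA.evalFrom_append, evalFrom_of_forall_lt hu, zero_mem_evalFrom_cons_iff]
      exact .inr ⟨rfl, p, hpc, ih⟩

theorem mem_accepts_iff : w ∈ (Ak k).accepts ↔ ∃ q, BlockWord q w := by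
  rw [NFA.mem_accepts, show (Ak k).accept = {0} from rfl, show (Ak k).start = Set.univ from rfl]
  simp only [Set.mem_singleton_iff, exists_eq_left]
  rw [NFA.mem_evalFrom_iff_exists]
  simp only [Set.mem_univ, true_and, zero_mem_evalFrom_iff]

end Ak

/-- The language `L(A_k)` is `(k+1)`-piecewise testable. -/
theorem stmt11 (k : ℕ) : IsPT (k + 1) (Ak k).accepts := by
  have preserved (u v : List (Fin (k + 1))) (he : kEquiv (k + 1) u v) :
      u ∈ (Ak k).accepts → v ∈ (Ak k).accepts := by
    simp only [Ak.mem_accepts_iff]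
    exact fun ⟨q, hq⟩ => ⟨q, hq.of_kEquiv k.succ_pos (fun a _ => a.isLt) he⟩
  exact fun u v he => ⟨preserved u v he, preserved v u he.symm⟩
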